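/- arXiv:2208.10392 — 2 statements merged into one kernel-verified Lean document; each statement's English description precedes it below -/
import Mathlib

section
/- Suppose x₀, x₁, …, x_{N-1} ∈ ℝⁿ satisfy x_{k+1} = A x_k + B u_k for inputs u_k ∈ ℝᵐ, where u_k ≠ 0 only when x_k ∈ span{x₀,…,x_{k-1}} (with span over the empty set understood as {0}). Then the set {x_k : u_k = 0, k ≤ N-1} spans the same subspace as {x₀, …, x_{N-1}}. -/
/-- If along the trajectory `x_{k+1} = A x_k + B u_k` the input
`u_k` is nonzero only when `x_k ∈ span{x₀,…,x_{k-1}}`, then the states visited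
with zero input span the same subspace as all visited states. -/
theorem zero_input_states_span {n m : ℕ}
    (A : Matrix (Fin n) (Fin n) ℝ) (B : Matrix (Fin n) (Fin m) ℝ)
    (N : ℕ) (x : ℕ → Fin n → ℝ) (u : ℕ → Fin m → ℝ)
    (hrec : ∀ k : ℕ, k + 1 ≤ N - 1 → x (k + 1) = A.mulVec (x k) + B.mulVec (u k))
    (hu : ∀ k : ℕ, k < N → u k ≠ 0 →
      x k ∈ Submodule.span ℝ (x '' {j | j < k})) :
    Submodule.span ℝ (x '' {k | k < N ∧ u k = 0}) =
      Submodule.span ℝ (x '' {k | k < N}) := by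
  have key : ∀ k, k < N → x k ∈ Submodule.span ℝ (x '' {k | k < N ∧ u k = 0}) := by
    intro k
    induction k using Nat.strong_induction_on with
    | _ k ih =>
      intro hk
      by_cases h : u k = 0
      · exact Submodule.subset_span ⟨k, ⟨hk, h⟩, rfl⟩
      · refine Submodule.span_le.mpr ?_ (hu k hk h)
        rintro w ⟨j, hj, rfl⟩
        exact ih j hj (hj.trans hk)
  apply le_antisymm
  · exact Submodule.span_mono (Set.image_mono fun k hk => hk.1)
  · rw [Submodule.span_le]
    rintro v ⟨k, hk, rfl⟩
    exact key k hk
end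

section
/- Let V ⊆ ℝⁿ × ℝᵐ be a subspace with the property that for some trajectory data, (u, x_{N-1}⁺) ∈ V for all u ∈ ℝᵐ, where V = span{(u₀,x₀),…,(u_{N-1},x_{N-1})} and x_{N-1}⁺ = A x_{N-1} + B u_{N-1}. Then for any x ∈ span{x₀,…,x_{N-1}} and any u ∈ ℝᵐ, the pair (u, x) lies in V. -/
/-- If `(ũ, x_{N-1}⁺) ∈ V := span{(u₀,x₀),…,(u_{N-1},x_{N-1})}`
for every `ũ ∈ ℝᵐ`, where `x_{N-1}⁺ = A x_{N-1} + B u_{N-1}`, then for every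
`x ∈ span{x₀,…,x_{N-1}}` and every `u ∈ ℝᵐ` the pair `(u, x)` lies in `V`. -/
theorem invariance_of_state_input_span {n m : ℕ}
    (A : Matrix (Fin n) (Fin n) ℝ) (B : Matrix (Fin n) (Fin m) ℝ)
    (N : ℕ) (hN : 1 ≤ N) (x : ℕ → Fin n → ℝ) (u : ℕ → Fin m → ℝ)
    (honline : ∀ k : ℕ, k + 1 ≤ N - 1 →
      x (k + 1) = A.mulVec (x k) + B.mulVec (u k))
    (hV : ∀ utilde : Fin m → ℝ,
      (utilde, A.mulVec (x (N - 1)) + B.mulVec (u (N - 1))) ∈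
        Submodule.span ℝ ((fun k => (u k, x k)) '' {k | k < N})) :
    ∀ xv ∈ Submodule.span ℝ (x '' {k | k < N}), ∀ uv : Fin m → ℝ,
      (uv, xv) ∈ Submodule.span ℝ ((fun k => (u k, x k)) '' {k | k < N}) := by
  intro xv hxv uv
  set V := Submodule.span ℝ ((fun k => (u k, x k)) '' {k | k < N}) with hVdef
  have hzero : ∀ w : Fin m → ℝ, ((w, (0 : Fin n → ℝ)) : (Fin m → ℝ) × (Fin n → ℝ)) ∈ V := by
    intro w
    have h1 := hV w
    have h2 := hV 0
    have := V.sub_mem h1 h2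
    simpa using this
  have hstate : ∀ k, k < N → (((0 : Fin m → ℝ), x k) : (Fin m → ℝ) × (Fin n → ℝ)) ∈ V := by
    intro k hk
    have hmem : ((u k, x k) : (Fin m → ℝ) × (Fin n → ℝ)) ∈ V :=
      Submodule.subset_span ⟨k, hk, rfl⟩
    have := V.sub_mem hmem (hzero (u k))
    simpa using this
  have hx0 : (((0 : Fin m → ℝ), xv) : (Fin m → ℝ) × (Fin n → ℝ)) ∈ V := by
    refine Submodule.span_induction ?_ ?_ ?_ ?_ hxv
    · rintro y ⟨k, hk, rfl⟩
      exact hstate k hk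
    · exact V.zero_mem
    · intro a b _ _ ha hb
      have := V.add_mem ha hb
      simpa using this
    · intro c a _ ha
      have := V.smul_mem c ha
      simpa [Prod.smul_mk] using this
  have := V.add_mem (hzero uv) hx0
  simpa using this
end
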